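/- Let λ ∈ ℝ and let a : ℕ → ℝ be any sequence (the coefficients of an invertible power series A(t)). For k ∈ ℕ define ℓ_{k,λ}(x) := (1/k!)·Σ_{j=0}^{k} (−x)^j·(1)_{j,λ}·L(k,j) (the coefficient of t^k in e_λ(−xt/(1−t))), and define y_{n,λ}(x) := Σ_{k=0}^{n} a_{n−k}·ℓ_{k,λ}(x) (the coefficient of t^n in A(t)·e_λ(−xt/(1−t))). Then for every n ≥ 1 and every x ∈ ℝ: y′_{n,λ}(x) = (1 + x·λ)·y′_{n−1,λ}(x) − y_{n−1,λ}(x), where ′ denotes the derivative with respect to x. -/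

import Mathlib

/-- The degenerate falling factorial `(1)_{m,λ} = ∏_{j=0}^{m-1} (1 - jλ)`. -/
noncomputable def degFall (lam : ℝ) (m : ℕ) : ℝ :=
  ∏ j ∈ Finset.range m, (1 - (j : ℝ) * lam)

/-- The Lah numbers: `L(n,k) = C(n−1,k−1)·n!/k!` for `1 ≤ k ≤ n`, with
`L(0,0) = 1` and `L(n,0) = 0` for `n ≥ 1`. -/
noncomputable def lah (n k : ℕ) : ℝ :=
  if k = 0 then (if n = 0 then 1 else 0)
  else (Nat.choose (n - 1) (k - 1) : ℝ) * (Nat.factorial n : ℝ) / (Nat.factorial k : ℝ)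

/-- `ℓ_{k,λ}(x)`: the coefficient of `t^k` in `e_λ(−xt/(1−t))`. -/
noncomputable def ellCoeff (lam : ℝ) (k : ℕ) (x : ℝ) : ℝ :=
  (1 / (Nat.factorial k : ℝ)) * ∑ j ∈ Finset.range (k + 1), (-x) ^ j * degFall lam j * lah k j

/-- `y_{n,λ}(x)`: the coefficient of `tⁿ` in `A(t)·e_λ(−xt/(1−t))`, where `A(t) = ∑ aₙ tⁿ`. -/
noncomputable def yCoeff (lam : ℝ) (a : ℕ → ℝ) (n : ℕ) (x : ℝ) : ℝ :=
  ∑ k ∈ Finset.range (n + 1), a (n - k) * ellCoeff lam k x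

/-!
Write `ℓ_{k,λ}(x) = ∑ⱼ β_{k,j} (-x)^j` with `β_{k,j} = (1)_{j,λ} L(k,j) / k!`. Comparing
coefficients, `ℓ'_{k+1} = (1 + xλ) ℓ'_k - ℓ_k` amounts to
`(j+1) β_{k+1,j+1} = (j+1) β_{k,j+1} + (1 - jλ) β_{k,j}`, which after
`(1)_{j+1,λ} = (1 - jλ) (1)_{j,λ}` is Pascal's rule for `(j+1) L(k,j+1) / k! = C(k-1,j) / j!`.
The recurrence for `y_n` follows by linearity, since `ℓ_0` is constant.
-/

open Finset Nat

lemma degFall_succ (lam : ℝ) (j : ℕ) :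
    degFall lam (j + 1) = (1 - j * lam) * degFall lam j := by
  rw [degFall, prod_range_succ, mul_comm]
  rfl

lemma lah_succ_div_factorial (n j : ℕ) :
    lah n (j + 1) / n ! = (n - 1).choose j / (j + 1)! := by
  have : (n ! : ℝ) ≠ 0 := by positivity
  simp only [lah, succ_ne_zero, if_false, add_tsub_cancel_right]
  field_simp

-- `k ≠ 0` excludes the junk value `lah 0 1 = 1`, caused by `0 - 1 = 0` in `ℕ`.
lemma lah_eq_zero_of_lt {k j : ℕ} (hk : k ≠ 0) (hkj : k < j) : lah k j = 0 := by
  simp [lah, choose_eq_zero_of_lt (by omega : k - 1 < j - 1), show j ≠ 0 by omega]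

lemma lah_div_factorial_pascal {k : ℕ} (hk : k ≠ 0) (i : ℕ) :
    (i + 1) * (lah (k + 1) (i + 1) / (k + 1)!) =
      (i + 1) * (lah k (i + 1) / k !) + lah k i / k ! := by
  obtain ⟨k, rfl⟩ := exists_eq_succ_of_ne_zero hk
  rcases i with _ | i
  · simp [lah, factorial_ne_zero]
  · rw [lah_succ_div_factorial, lah_succ_div_factorial, lah_succ_div_factorial]
    simp only [succ_sub_one, add_tsub_cancel_right, choose_succ_succ', factorial_succ]
    push_cast
    field_simp
    ring

noncomputable def ellWeight (lam : ℝ) (k j : ℕ) : ℝ :=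
  degFall lam j * (lah k j / k !)

lemma ellCoeff_eq_sum (lam : ℝ) (k : ℕ) (x : ℝ) :
    ellCoeff lam k x = ∑ j ∈ range (k + 1), ellWeight lam k j * (-x) ^ j := by
  rw [ellCoeff, mul_sum]
  exact sum_congr rfl fun j _ => by rw [ellWeight]; ring

lemma ellWeight_succ_eq_zero (lam : ℝ) {k : ℕ} (hk : k ≠ 0) : ellWeight lam k (k + 1) = 0 := by
  simp [ellWeight, lah_eq_zero_of_lt hk k.lt_succ_self]

lemma ellWeight_succ_succ (lam : ℝ) {k : ℕ} (hk : k ≠ 0) (i : ℕ) :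
    (i + 1) * ellWeight lam (k + 1) (i + 1) =
      (i + 1) * ellWeight lam k (i + 1) + (1 - i * lam) * ellWeight lam k i := by
  simp only [ellWeight, degFall_succ]
  linear_combination (1 - i * lam) * degFall lam i * lah_div_factorial_pascal hk i

lemma hasDerivAt_sum_mul_neg_pow (c : ℕ → ℝ) (N : ℕ) (x : ℝ) :
    HasDerivAt (fun x => ∑ j ∈ range (N + 1), c j * (-x) ^ j)
      (-∑ j ∈ range N, (j + 1) * c (j + 1) * (-x) ^ j) x := by
  have hterm (j : ℕ) : HasDerivAt (fun x => c j * (-x) ^ j) (-(c j * (j * (-x) ^ (j - 1)))) x := by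
    simpa using (((hasDerivAt_pow j (-x)).comp x (hasDerivAt_neg x)).const_mul (c j))
  refine (HasDerivAt.fun_sum fun j (_ : j ∈ range (N + 1)) => hterm j).congr_deriv ?_
  rw [sum_range_succ', ← sum_neg_distrib]
  simp only [CharP.cast_eq_zero, zero_mul, mul_zero, neg_zero, add_zero, add_tsub_cancel_right]
  exact sum_congr rfl fun j _ => by push_cast; ring

lemma hasDerivAt_ellCoeff (lam : ℝ) (k : ℕ) (x : ℝ) :
    HasDerivAt (ellCoeff lam k)
      (-∑ j ∈ range k, (j + 1) * ellWeight lam k (j + 1) * (-x) ^ j) x := by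
  rw [show ellCoeff lam k = _ from funext (ellCoeff_eq_sum lam k)]
  exact hasDerivAt_sum_mul_neg_pow _ k x

lemma deriv_ellCoeff_succ (lam : ℝ) (k : ℕ) (x : ℝ) :
    deriv (ellCoeff lam (k + 1)) x =
      (1 + x * lam) * deriv (ellCoeff lam k) x - ellCoeff lam k x := by
  rw [(hasDerivAt_ellCoeff lam _ x).deriv, (hasDerivAt_ellCoeff lam k x).deriv]
  rcases eq_or_ne k 0 with rfl | hk
  · simp [ellWeight, ellCoeff, degFall, lah]
  rw [ellCoeff_eq_sum]
  set u := -x with hu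
  set D := ∑ j ∈ range k, (j + 1) * ellWeight lam k (j + 1) * u ^ j
  have hsplit : ∑ j ∈ range (k + 1), (j + 1) * ellWeight lam (k + 1) (j + 1) * u ^ j =
      ∑ j ∈ range (k + 1), (j + 1) * ellWeight lam k (j + 1) * u ^ j +
        ∑ j ∈ range (k + 1), ellWeight lam k j * u ^ j -
        lam * ∑ j ∈ range (k + 1), j * ellWeight lam k j * u ^ j := by
    rw [mul_sum, ← sum_add_distrib, ← sum_sub_distrib]
    refine sum_congr rfl fun j _ => ?_
    rw [ellWeight_succ_succ lam hk]
    ring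
  have htop : ∑ j ∈ range (k + 1), (j + 1) * ellWeight lam k (j + 1) * u ^ j = D := by
    rw [sum_range_succ, ellWeight_succ_eq_zero lam hk, mul_zero, zero_mul, add_zero]
  have hshift : ∑ j ∈ range (k + 1), j * ellWeight lam k j * u ^ j = u * D := by
    rw [sum_range_succ', mul_sum]
    simp only [CharP.cast_eq_zero, zero_mul, add_zero, cast_succ]
    exact sum_congr rfl fun j _ => by ring
  rw [hsplit, htop, hshift, hu]
  ring

lemma hasDerivAt_yCoeff (lam : ℝ) (a : ℕ → ℝ) (n : ℕ) (x : ℝ) :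
    HasDerivAt (yCoeff lam a n)
      (∑ k ∈ range (n + 1), a (n - k) * deriv (ellCoeff lam k) x) x :=
  HasDerivAt.fun_sum fun k _ =>
    (hasDerivAt_ellCoeff lam k x).differentiableAt.hasDerivAt.const_mul _

/-- Theorem 6, first identity: `y′_{n,λ}(x) = (1 + xλ) y′_{n−1,λ}(x) − y_{n−1,λ}(x)` for `n ≥ 1`. -/
theorem yCoeff_deriv_recurrence (lam : ℝ) (a : ℕ → ℝ) (n : ℕ) (hn : 1 ≤ n) (x : ℝ) :
    deriv (yCoeff lam a n) x =
      (1 + x * lam) * deriv (yCoeff lam a (n - 1)) x - yCoeff lam a (n - 1) x := by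
  obtain ⟨m, rfl⟩ := Nat.exists_eq_add_of_le' hn
  have hderiv_zero : deriv (ellCoeff lam 0) x = 0 := by
    simp [(hasDerivAt_ellCoeff lam 0 x).deriv]
  rw [add_tsub_cancel_right, (hasDerivAt_yCoeff lam a _ x).deriv,
    (hasDerivAt_yCoeff lam a m x).deriv, sum_range_succ', hderiv_zero, mul_zero, add_zero,
    yCoeff, mul_sum, ← sum_sub_distrib]
  refine sum_congr rfl fun k _ => ?_
  rw [deriv_ellCoeff_succ, add_tsub_add_eq_tsub_right]
  ring
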